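/- Fix c, B̃ > 0 and 0 < v < g_tr, and set λ = 0. Then lim_{k→∞} k² v (g_tr − v) exp(k(g_tr − v)²) · E_rel(g_tr, v) = 2π² B̃ c g_tr, where E_rel(g_tr, v) := 16π² B̃ c ∫_{g_tr}^{∞} exp(−k(v−g)²) · [(1 − exp(−4kvg))/(4kvg)] · g² dg. Equivalently, for g_tr > v, E_rel(g_tr, v) ∼ 2π² B̃ c g_tr exp(−k(g_tr−v)²) / (k² v (g_tr−v)) as k → ∞, which is a rapidly decaying function of g_tr − v. -/

import Mathlib

open MeasureTheory Real Filter

noncomputable section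

/-- The error bound `E_rel(g_tr, v)` for Maxwell-type collisions (`λ = 0`), as a function of the
width parameter `k`:
`E_rel(g_tr,v) = 16π² B̃ c ∫_{g_tr}^∞ e^{−k(v−g)²} [(1−e^{−4kvg})/(4kvg)] g² dg`. -/
def Erel (Btil c k gtr v : ℝ) : ℝ :=
  16 * π ^ 2 * Btil * c *
    ∫ g in Set.Ioi gtr,
      Real.exp (-k * (v - g) ^ 2) * ((1 - Real.exp (-(4 * k * v * g))) / (4 * k * v * g)) * g ^ 2

/-!
Since `e^{-k(g-v)²}(1 - e^{-4kvg}) = e^{-k(g-v)²} - e^{-k(g+v)²}`, the integrand of `E_rel` is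
`g (e^{-k(g-v)²} - e^{-k(g+v)²}) / (4kv)`, so `E_rel` is explicit in terms of the Gaussian
tails `∫_a^∞ e^{-kx²} dx` at `a = g_tr ∓ v`. The substitution `x = a + t/k` and dominated
convergence give `k e^{ka²} ∫_a^∞ e^{-kx²} dx → 1/(2a)` for `a > 0`. The tail at `g_tr + v` is
exponentially smaller than the one at `g_tr - v`, so only the latter contributes to the limit.
-/

open Set Topology

theorem integral_Ioi_comp_add_right {E : Type*} [NormedAddCommGroup E] [NormedSpace ℝ E]
    (f : ℝ → E) (a c : ℝ) : ∫ x in Ioi a, f (x + c) = ∫ x in Ioi (a + c), f x := by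
  simpa using (measurePreserving_add_right volume c).setIntegral_preimage_emb
    (measurableEmbedding_addRight c) f (Ioi (a + c))

theorem integral_Ioi_mul_exp_neg_mul_sq {k : ℝ} (hk : 0 < k) (a : ℝ) :
    ∫ x in Ioi a, x * exp (-k * x ^ 2) = exp (-k * a ^ 2) / (2 * k) := by
  have hderiv (x : ℝ) : HasDerivAt (fun y => -exp (-k * y ^ 2) / (2 * k))
      (x * exp (-k * x ^ 2)) x := by
    refine (((hasDerivAt_pow 2 x).const_mul (-k)).exp.neg.div_const (2 * k)).congr_deriv ?_
    field_simp
    ring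
  have hlim : Tendsto (fun y => -exp (-k * y ^ 2) / (2 * k)) atTop (𝓝 0) := by
    have hsq : Tendsto (fun y : ℝ => -k * y ^ 2) atTop atBot :=
      (tendsto_pow_atTop two_ne_zero).const_mul_atTop_of_neg (neg_lt_zero.2 hk)
    simpa using (tendsto_exp_atBot.comp hsq).neg.div_const (2 * k)
  rw [integral_Ioi_of_hasDerivAt_of_tendsto' (fun x _ => hderiv x)
    (integrable_mul_exp_neg_mul_sq hk).integrableOn hlim]
  ring

theorem integral_Ioi_mul_exp_neg_mul_sub_sq {k : ℝ} (hk : 0 < k) (a s : ℝ) :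
    ∫ g in Ioi a, g * exp (-k * (g - s) ^ 2) =
      exp (-k * (a - s) ^ 2) / (2 * k) + s * ∫ x in Ioi (a - s), exp (-k * x ^ 2) := by
  have hshift := integral_Ioi_comp_add_right (fun g => g * exp (-k * (g - s) ^ 2)) (a - s) s
  simp only [sub_add_cancel, add_sub_cancel_right, add_mul] at hshift
  rw [← hshift, integral_add (integrable_mul_exp_neg_mul_sq hk).integrableOn
    ((integrable_exp_neg_mul_sq hk).integrableOn.const_mul s), integral_const_mul,
    integral_Ioi_mul_exp_neg_mul_sq hk]

theorem integrable_mul_exp_neg_mul_sub_sq {k : ℝ} (hk : 0 < k) (s : ℝ) :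
    Integrable fun g => g * exp (-k * (g - s) ^ 2) := by
  refine (((integrable_mul_exp_neg_mul_sq hk).comp_sub_right s).add
    (((integrable_exp_neg_mul_sq hk).comp_sub_right s).const_mul s)).congr
    (Eventually.of_forall fun g => ?_)
  simp only [Pi.add_apply]
  ring

theorem mul_exp_mul_sq_mul_integral_Ioi_exp_neg_mul_sq {k : ℝ} (hk : 0 < k) (a : ℝ) :
    k * exp (k * a ^ 2) * ∫ x in Ioi a, exp (-k * x ^ 2) =
      ∫ t in Ioi 0, exp (-(2 * a * t + t ^ 2 / k)) := by
  have hshift := integral_Ioi_comp_add_right (fun x => exp (-k * x ^ 2)) 0 a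
  have hscale := integral_comp_mul_left_Ioi
    (fun t => exp (k * a ^ 2) * exp (-k * (t / k + a) ^ 2)) 0 hk
  simp only [zero_add, mul_zero, smul_eq_mul, mul_div_cancel_left₀ _ hk.ne'] at hshift hscale
  rw [← hshift, mul_assoc, ← integral_const_mul, hscale, ← mul_assoc,
    mul_inv_cancel₀ hk.ne', one_mul]
  refine setIntegral_congr_fun measurableSet_Ioi fun t _ => ?_
  rw [← exp_add]
  congr 1
  field_simp
  ring

theorem tendsto_mul_exp_mul_sq_mul_integral_Ioi_exp_neg_mul_sq {a : ℝ} (ha : 0 < a) :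
    Tendsto (fun k => k * exp (k * a ^ 2) * ∫ x in Ioi a, exp (-k * x ^ 2)) atTop
      (𝓝 (1 / (2 * a))) := by
  have hlimit : ∫ t in Ioi 0, exp (-(2 * a) * t) = 1 / (2 * a) := by
    rw [integral_exp_mul_Ioi (by linarith) 0]
    field_simp
    simp
  rw [← hlimit]
  refine Tendsto.congr' (eventually_gt_atTop 0 |>.mono fun k hk =>
    (mul_exp_mul_sq_mul_integral_Ioi_exp_neg_mul_sq hk a).symm) ?_
  refine tendsto_integral_filter_of_dominated_convergence _
    (Eventually.of_forall fun k => by fun_prop) ?_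
    (exp_neg_integrableOn_Ioi 0 (by linarith : 0 < 2 * a)) ?_
  · filter_upwards [eventually_gt_atTop 0] with k hk
    refine Eventually.of_forall fun t => ?_
    rw [norm_of_nonneg (exp_pos _).le, exp_le_exp]
    nlinarith [div_nonneg (sq_nonneg t) hk.le]
  · refine Eventually.of_forall fun t => ?_
    have : Tendsto (fun k => t ^ 2 / k) atTop (𝓝 0) := tendsto_const_nhds.div_atTop tendsto_id
    simpa using ((tendsto_const_nhds (x := 2 * a * t)).add this).neg.rexp

theorem exp_neg_mul_sub_sq_mul_one_sub_exp_div {k v : ℝ} (hk : k ≠ 0) (hv : v ≠ 0) (g : ℝ) :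
    exp (-k * (v - g) ^ 2) * ((1 - exp (-(4 * k * v * g))) / (4 * k * v * g)) * g ^ 2 =
      (g * exp (-k * (g - v) ^ 2) - g * exp (-k * (g - -v) ^ 2)) / (4 * k * v) := by
  have hfactor : exp (-k * (g - -v) ^ 2) = exp (-k * (v - g) ^ 2) * exp (-(4 * k * v * g)) := by
    rw [← exp_add]
    ring_nf
  rcases eq_or_ne g 0 with rfl | hg
  · simp
  · rw [hfactor, ← neg_sub v g, neg_sq]
    field_simp

theorem Erel_eq {k v : ℝ} (hk : 0 < k) (hv : v ≠ 0) (Btil c gtr : ℝ) :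
    Erel Btil c k gtr v = 4 * π ^ 2 * Btil * c / (k * v) *
      ((exp (-k * (gtr - v) ^ 2) - exp (-k * (gtr + v) ^ 2)) / (2 * k) +
        v * ((∫ x in Ioi (gtr - v), exp (-k * x ^ 2)) +
          ∫ x in Ioi (gtr + v), exp (-k * x ^ 2))) := by
  simp only [Erel, exp_neg_mul_sub_sq_mul_one_sub_exp_div hk.ne' hv, integral_div]
  rw [integral_sub (integrable_mul_exp_neg_mul_sub_sq hk v).integrableOn
    (integrable_mul_exp_neg_mul_sub_sq hk (-v)).integrableOn,
    integral_Ioi_mul_exp_neg_mul_sub_sq hk, integral_Ioi_mul_exp_neg_mul_sub_sq hk, sub_neg_eq_add]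
  field_simp
  ring

theorem Erel_asymptotics_exterior_general (c Btil v gtr : ℝ)
    (hv : 0 < v) (hvg : v < gtr) :
    Tendsto
      (fun k : ℝ =>
        k ^ 2 * v * (gtr - v) * Real.exp (k * (gtr - v) ^ 2) * Erel Btil c k gtr v) atTop
      (nhds (2 * π ^ 2 * Btil * c * gtr)) := by
  have ha : 0 < gtr - v := by linarith
  have hb : 0 < gtr + v := by linarith
  have hratio : Tendsto (fun k => exp (k * (gtr - v) ^ 2) * exp (-k * (gtr + v) ^ 2)) atTop
      (𝓝 0) := by
    have hgap : 0 < (gtr + v) ^ 2 - (gtr - v) ^ 2 := by nlinarith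
    refine (tendsto_exp_neg_atTop_nhds_zero.comp (tendsto_id.const_mul_atTop hgap)).congr
      fun k => ?_
    rw [Function.comp_apply, id, ← exp_add]
    ring_nf
  -- by `Erel_eq`, the scaled `E_rel` is this combination of the two rescaled tails
  have hlim := ((((tendsto_const_nhds (x := (1 : ℝ))).sub hratio).div_const 2).add
    (((tendsto_mul_exp_mul_sq_mul_integral_Ioi_exp_neg_mul_sq ha).add
      (hratio.mul (tendsto_mul_exp_mul_sq_mul_integral_Ioi_exp_neg_mul_sq hb))).const_mul
        v)).const_mul (4 * π ^ 2 * Btil * c * (gtr - v))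
  have hvalue : 4 * π ^ 2 * Btil * c * (gtr - v) *
      ((1 - 0) / 2 + v * (1 / (2 * (gtr - v)) + 0 * (1 / (2 * (gtr + v))))) =
        2 * π ^ 2 * Btil * c * gtr := by
    field_simp
    ring
  rw [hvalue] at hlim
  refine hlim.congr' ?_
  filter_upwards [eventually_gt_atTop 0] with k hk
  rw [Erel_eq hk hv.ne']
  simp only [neg_mul, exp_neg]
  field_simp

/-- for `0 < v < g_tr`,
`k² v (g_tr − v) e^{k(g_tr − v)²} E_rel(g_tr, v) → 2π² B̃ c g_tr` as `k → ∞`; equivalently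
`E_rel(g_tr, v) ∼ 2π² B̃ c g_tr e^{−k(g_tr−v)²} / (k² v (g_tr−v))`. -/
theorem Erel_asymptotics_exterior (c Btil v gtr : ℝ) (hc : 0 < c) (hB : 0 < Btil)
    (hv : 0 < v) (hvg : v < gtr) :
    Tendsto
      (fun k : ℝ =>
        k ^ 2 * v * (gtr - v) * Real.exp (k * (gtr - v) ^ 2) * Erel Btil c k gtr v) atTop
      (nhds (2 * π ^ 2 * Btil * c * gtr)) :=
  Erel_asymptotics_exterior_general c Btil v gtr hv hvg

end
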